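/- arXiv:2602.23597 — 2 statements merged into one kernel-verified Lean document; each statement's English description precedes it below -/
import Mathlib

section
/- Define sequences of integer polynomials P_n(X), Q_n(X) by P_1(X) = X, Q_1(X) = 1, and the recurrence P_{n+1}(X) = P_n(X) + X·Q_n(X), Q_{n+1}(X) = Q_n(X) − X·P_n(X) for n ≥ 1. Then for every integer n ≥ 2, the integer polynomial P_n(X) − n·X·Q_n(X) is not the zero polynomial. -/
open Polynomial

/-- Let `P n`, `Q n` be the integer polynomials with `P 1 = X`, `Q 1 = 1` and
`P (n+1) = P n + X·Q n`, `Q (n+1) = Q n − X·P n` for `n ≥ 1`. Then for every `n ≥ 2`,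
the integer polynomial `P n − n·X·Q n` is nonzero. -/
theorem stmt_11 (P Q : ℕ → Polynomial ℤ)
    (hP1 : P 1 = X) (hQ1 : Q 1 = 1)
    (hPrec : ∀ n : ℕ, 1 ≤ n → P (n + 1) = P n + X * Q n)
    (hQrec : ∀ n : ℕ, 1 ≤ n → Q (n + 1) = Q n - X * P n)
    (n : ℕ) (hn : 2 ≤ n) :
    P n - Polynomial.C (n : ℤ) * X * Q n ≠ 0 := by
  have key : ∀ m : ℕ, 1 ≤ m →
      (P m).coeff 0 = 0 ∧ (Q m).coeff 0 = 1 ∧ (Q m).coeff 1 = 0 ∧ (Q m).coeff 2 = -(m.choose 2 : ℤ) ∧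
      (P m).coeff 1 = (m : ℤ) ∧ (P m).coeff 2 = 0 ∧ (P m).coeff 3 = -(m.choose 3 : ℤ) := by
    intro m hm
    induction m, hm using Nat.le_induction with
    | base => simp [hP1, hQ1, coeff_X, coeff_one, Nat.choose]
    | succ k hk ih =>
      obtain ⟨p0, q0, q1, q2, p1, p2, p3⟩ := ih
      rw [hPrec k hk, hQrec k hk]
      have hXQ : ∀ j : ℕ, (X * Q k).coeff (j + 1) = (Q k).coeff j := fun j => coeff_X_mul _ _
      have hXP : ∀ j : ℕ, (X * P k).coeff (j + 1) = (P k).coeff j := fun j => coeff_X_mul _ _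
      have c2 : (k + 1).choose 2 = k.choose 2 + k := by
        rw [Nat.choose_succ_succ]; simp [Nat.choose_one_right, Nat.add_comm]
      have c3 : (k + 1).choose 3 = k.choose 3 + k.choose 2 := by
        rw [Nat.choose_succ_succ]; ring
      refine ⟨?_, ?_, ?_, ?_, ?_, ?_, ?_⟩
      · simp [coeff_add, p0, coeff_X_mul_zero]
      · simp [coeff_sub, q0, coeff_X_mul_zero]
      · have := hXP 0
        simp only [coeff_sub, q1, this, p0]
        ring
      · have := hXP 1
        simp only [coeff_sub, q2, this, p1, c2]
        push_cast; ring
      · have := hXQ 0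
        simp only [coeff_add, p1, this, q0]
        push_cast; ring
      · have := hXQ 1
        simp only [coeff_add, p2, this, q1]
        ring
      · have := hXQ 2
        simp only [coeff_add, p3, this, q2, c3]
        push_cast; ring
  obtain ⟨p0, q0, q1, q2, p1, p2, p3⟩ := key n (by omega)
  intro h
  have hc : (P n - Polynomial.C (n : ℤ) * X * Q n).coeff 3 = 0 := by rw [h]; simp
  rw [coeff_sub, mul_assoc, coeff_C_mul, coeff_X_mul, p3, q2, mul_neg] at hc
  have hlt : n.choose 3 < n * n.choose 2 := by
    have h1 : n.choose 3 * 3 = n.choose 2 * (n - 2) := by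
      have := Nat.choose_succ_right_eq n 2
      simpa using this
    have h2 : 0 < n.choose 2 := Nat.choose_pos (by omega)
    nlinarith [Nat.sub_le n 2]
  have hlt' : (n.choose 3 : ℤ) < (n : ℤ) * (n.choose 2 : ℤ) := by exact_mod_cast hlt
  linarith
end

section
/- Let n ≥ 2 be an integer and let α ∈ (0, π/2) be a real number with cos(nα) ≠ 0 satisfying n·tan α = tan(nα). Then the complex number β = e^{iα} is algebraic over ℚ and is not a root of unity. -/
/-!
With `w = e^{2iα}`, the relation `n tan α = tan (n α)` says that `w` is a root of the nonzero
rational polynomial `n (X - 1) (Xⁿ + 1) - (Xⁿ - 1) (X + 1)`, so `e^{iα}` is algebraic.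
Suppose `w` is a root of unity; it is not `±1` since `0 < 2α < π`. In the number field `ℚ(w)`
the relation reads `(n + 1) (wⁿ + 1) (w - 1) = 2 (w^{n+1} - 1)`. The factor `(wⁿ + 1) (w - 1)` is
a nonzero algebraic integer, so its house is at least `1`, while every conjugate of
`w^{n+1} - 1` has modulus at most `2`; hence `n + 1 ≤ 4`. For `n = 2, 3` the polynomial is
`(X - 1)³` and `2 (X - 1)³ (X + 1)`, whose only roots are `±1`.
-/

open Polynomial NumberField

noncomputable def tanMulPoly (n : ℕ) : ℚ[X] :=
  (n : ℚ[X]) * (X - 1) * (X ^ n + 1) - (X ^ n - 1) * (X + 1)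

theorem aeval_tanMulPoly {A : Type*} [CommRing A] [Algebra ℚ A] (n : ℕ) (x : A) :
    aeval x (tanMulPoly n) = n * (x - 1) * (x ^ n + 1) - (x ^ n - 1) * (x + 1) := by
  simp [tanMulPoly]

theorem tanMulPoly_ne_zero {n : ℕ} (hn : 2 ≤ n) : tanMulPoly n ≠ 0 := by
  have h0 : eval 0 (tanMulPoly n) = 1 - n := by
    simp [tanMulPoly, zero_pow (by omega : n ≠ 0)]; ring
  have : (1 : ℚ) < n := by exact_mod_cast hn
  intro h
  rw [h, eval_zero] at h0
  linarith

theorem eq_one_or_eq_neg_one_of_aeval_tanMulPoly {F : Type*} [Field F] [CharZero F] {n : ℕ}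
    (hn : 2 ≤ n) (hn3 : n ≤ 3) {w : F} (h : aeval w (tanMulPoly n) = 0) : w = 1 ∨ w = -1 := by
  rw [aeval_tanMulPoly] at h
  interval_cases n
  · have : (w - 1) ^ 3 = 0 := by linear_combination h
    exact .inl (sub_eq_zero.mp (pow_eq_zero_iff three_ne_zero |>.mp this))
  · have : (w - 1) ^ 3 * (w + 1) = 0 := by linear_combination h / 2
    rcases mul_eq_zero.mp this with h1 | h1
    · exact .inl (sub_eq_zero.mp (pow_eq_zero_iff three_ne_zero |>.mp h1))
    · exact .inr (eq_neg_of_add_eq_zero_left h1)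

namespace NumberField

variable {K : Type*} [Field K] [NumberField K]

theorem house_le_of_forall_norm_le {x : K} {B : ℝ} (h : ∀ σ : K →+* ℂ, ‖σ x‖ ≤ B) :
    house x ≤ B := by
  have hB : 0 ≤ B := (norm_nonneg _).trans (h (Classical.arbitrary _))
  exact (pi_norm_le_iff_of_nonneg hB).2 h

theorem house_pow_sub_one_le_two {ω : K} (hω : IsOfFinOrder ω) (k : ℕ) :
    house (ω ^ k - 1) ≤ 2 := by
  refine house_le_of_forall_norm_le fun σ => ?_
  calc ‖σ (ω ^ k - 1)‖ ≤ ‖σ ω‖ ^ k + 1 := by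
        simpa [map_sub, map_pow, norm_pow] using norm_sub_le (σ ω ^ k) 1
    _ = 2 := by rw [show ‖σ ω‖ = 1 from (σ.toMonoidHom.isOfFinOrder hω).norm_eq_one]; norm_num

theorem le_three_of_aeval_tanMulPoly {ω : K} (hω : IsOfFinOrder ω) (h1 : ω ≠ 1) (h2 : ω ≠ -1)
    {n : ℕ} (h : aeval ω (tanMulPoly n) = 0) : n ≤ 3 := by
  rw [aeval_tanMulPoly] at h
  set u := (ω ^ n + 1) * (ω - 1)
  have hrel : ((n + 1 : ℕ) : K) * u = ((2 : ℕ) : K) * (ω ^ (n + 1) - 1) := by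
    push_cast; linear_combination h
  have hu0 : u ≠ 0 := by
    refine mul_ne_zero (fun hn => h2 ?_) (sub_ne_zero.mpr h1)
    linear_combination (h - (n * (ω - 1) - (ω + 1)) * hn) / 2
  have hωint : IsIntegral ℤ ω := (IsPrimitiveRoot.orderOf ω).isIntegral hω.orderOf_pos
  have hu : IsIntegral ℤ u := ((hωint.pow n).add isIntegral_one).mul (hωint.sub isIntegral_one)
  have hbound : ((n + 1 : ℕ) : ℝ) ≤ 2 * 2 :=
    calc ((n + 1 : ℕ) : ℝ) ≤ (n + 1 : ℕ) * house u :=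
          le_mul_of_one_le_right (by positivity) (one_le_house_of_isIntegral hu hu0)
      _ = 2 * house (ω ^ (n + 1) - 1) := by rw [← house_nat_mul, hrel, house_nat_mul]; norm_num
      _ ≤ 2 * 2 := by gcongr; exact house_pow_sub_one_le_two hω _
  norm_cast at hbound
  omega

end NumberField

open IntermediateField in
theorem Complex.le_three_of_aeval_tanMulPoly {w : ℂ} (hw : IsOfFinOrder w) (h1 : w ≠ 1)
    (h2 : w ≠ -1) {n : ℕ} (h : aeval w (tanMulPoly n) = 0) : n ≤ 3 := by
  have hint : IsIntegral ℚ w := ((IsPrimitiveRoot.orderOf w).isIntegral hw.orderOf_pos).tower_top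
  have : NumberField ℚ⟮w⟯ := { to_finiteDimensional := adjoin.finiteDimensional hint }
  have hinj : Function.Injective (algebraMap ℚ⟮w⟯ ℂ) := (algebraMap ℚ⟮w⟯ ℂ).injective
  have hgen : algebraMap ℚ⟮w⟯ ℂ (AdjoinSimple.gen ℚ w) = w := AdjoinSimple.algebraMap_gen ℚ w
  refine NumberField.le_three_of_aeval_tanMulPoly (ω := AdjoinSimple.gen ℚ w) ?_ ?_ ?_ ?_
  · rw [← (hinj : Function.Injective (algebraMap ℚ⟮w⟯ ℂ : ℚ⟮w⟯ →* ℂ)).isOfFinOrder_iff]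
    simpa [hgen] using hw
  · exact fun h => h1 (by rw [← hgen, h, map_one])
  · exact fun h => h2 (by rw [← hgen, h, map_neg, map_one])
  · exact hinj (by rw [← aeval_algebraMap_apply, hgen, h, map_zero])

namespace Complex

theorem tan_mul_I_mul_exp_sq_add_one {x : ℝ} (hx : Real.cos x ≠ 0) :
    Real.tan x * I * (exp (x * I) ^ 2 + 1) = exp (x * I) ^ 2 - 1 := by
  have hc : cos x ≠ 0 := by exact_mod_cast hx
  rw [ofReal_tan, tan_eq_sin_div_cos, exp_mul_I]
  field_simp
  linear_combination (-(I * sin x + cos x)) * sin_sq_add_cos_sq (x : ℂ) +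
    sin x ^ 2 * (cos x + sin x * I) * I_sq

theorem aeval_exp_sq_tanMulPoly {n : ℕ} {x : ℝ} (hx : Real.cos x ≠ 0)
    (hnx : Real.cos (n * x) ≠ 0) (h : n * Real.tan x = Real.tan (n * x)) :
    aeval (exp (x * I) ^ 2) (tanMulPoly n) = 0 := by
  have h1 := tan_mul_I_mul_exp_sq_add_one hx
  have h2 := tan_mul_I_mul_exp_sq_add_one hnx
  have hpow : exp ((n * x : ℝ) * I) ^ 2 = (exp (x * I) ^ 2) ^ n := by
    rw [← pow_mul, ← exp_nat_mul, ← exp_nat_mul]; push_cast; ring_nf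
  have h' : (n : ℂ) * Real.tan x = Real.tan (n * x) := by exact_mod_cast congrArg ofReal h
  rw [hpow] at h2
  rw [aeval_tanMulPoly]
  set w := exp (x * I) ^ 2
  linear_combination (-(n * (w ^ n + 1))) * h1 + (w + 1) * h2 + I * (w + 1) * (w ^ n + 1) * h'

theorem im_exp_mul_I_sq_pos {x : ℝ} (h0 : 0 < x) (hπ : x < Real.pi / 2) :
    0 < (exp (x * I) ^ 2).im := by
  rw [← exp_nat_mul, show ((2 : ℕ) : ℂ) * (x * I) = (2 * x : ℝ) * I by push_cast; ring,
    exp_ofReal_mul_I_im]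
  exact Real.sin_pos_of_pos_of_lt_pi (by linarith) (by linarith)

end Complex

/-- If `n ≥ 2` is an integer and `α ∈ (0, π/2)` satisfies `n·tan α = tan(nα)`,
then `β = e^{iα}` is algebraic over `ℚ` and is not a root of unity. -/
theorem stmt_12 (n : ℕ) (hn : 2 ≤ n) (α : ℝ) (hα : α ∈ Set.Ioo 0 (Real.pi / 2))
    (hcos : Real.cos (n * α) ≠ 0) (heq : (n : ℝ) * Real.tan α = Real.tan (n * α)) :
    IsAlgebraic ℚ (Complex.exp (Complex.I * α)) ∧
    ¬ ∃ m : ℕ, 0 < m ∧ (Complex.exp (Complex.I * α)) ^ m = 1 := by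
  obtain ⟨hα0, hαπ⟩ := hα
  have hcosα : Real.cos α ≠ 0 := (Real.cos_pos_of_mem_Ioo ⟨by linarith, hαπ⟩).ne'
  have hroot := Complex.aeval_exp_sq_tanMulPoly hcosα hcos heq
  have him := Complex.im_exp_mul_I_sq_pos hα0 hαπ
  rw [mul_comm Complex.I]
  refine ⟨IsAlgebraic.of_pow two_pos ⟨_, tanMulPoly_ne_zero hn, hroot⟩, ?_⟩
  rintro ⟨m, hm, hpow⟩
  have hfin := (isOfFinOrder_iff_pow_eq_one.2 ⟨m, hm, hpow⟩).pow (n := 2)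
  have h1 : Complex.exp (α * Complex.I) ^ 2 ≠ 1 := fun h => by simp [h] at him
  have h2 : Complex.exp (α * Complex.I) ^ 2 ≠ -1 := fun h => by simp [h] at him
  have hn3 := Complex.le_three_of_aeval_tanMulPoly hfin h1 h2 hroot
  rcases eq_one_or_eq_neg_one_of_aeval_tanMulPoly hn hn3 hroot with h | h
  exacts [h1 h, h2 h]
end
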